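/- arXiv:math/0011022 — 6 statements merged into one kernel-verified Lean document; each statement's English description precedes it below -/
import Mathlib

section
/- Let A, B, C, D, E, F be points in ℝ³ and define D(P,Q,R,S) := det(Q − P, R − P, S − P). Then the trilinear identity holds: D(A,B,C,E)·D(A,B,D,F)·D(C,D,E,F) + D(A,C,E,F)·D(A,B,D,F)·D(B,C,D,E) + D(A,B,C,D)·D(A,D,E,F)·D(B,C,E,F) = D(A,B,D,E)·D(A,C,D,F)·D(B,C,E,F). -/
/-- Six times the signed volume of the tetrahedron `P Q R S`. -/
noncomputable def Dvol (P Q R S : Fin 3 → ℝ) : ℝ :=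
  (Matrix.of ![Q - P, R - P, S - P]).det

private lemma det3_gp (a b c d e f : Fin 3 → ℝ) :
    (Matrix.of ![b, c, d]).det * (Matrix.of ![a, e, f]).det
      - (Matrix.of ![a, c, d]).det * (Matrix.of ![b, e, f]).det
      + (Matrix.of ![a, b, d]).det * (Matrix.of ![c, e, f]).det
      - (Matrix.of ![a, b, c]).det * (Matrix.of ![d, e, f]).det = 0 := by
  simp only [Matrix.det_fin_three, Matrix.of_apply, Matrix.cons_val', Matrix.cons_val_zero,
    Matrix.cons_val_one, Matrix.head_cons, Matrix.empty_val', Matrix.cons_val_fin_one,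
    Matrix.head_fin_const, Matrix.cons_val_two, Matrix.tail_cons]
  ring

/-- GP (Plücker-type) relation in terms of `Dvol` with a common base point `A`. -/
private lemma Dvol_gp (A B C D E M N : Fin 3 → ℝ) :
    Dvol A C D E * Dvol A B M N - Dvol A B D E * Dvol A C M N
      + Dvol A B C E * Dvol A D M N - Dvol A B C D * Dvol A E M N = 0 :=
  det3_gp (B - A) (C - A) (D - A) (E - A) (M - A) (N - A)

private lemma Dvol_comm (P Q R S : Fin 3 → ℝ) : Dvol P R Q S = -Dvol P Q R S := by
  simp only [Dvol, Matrix.det_fin_three, Matrix.of_apply, Matrix.cons_val', Matrix.cons_val_zero,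
    Matrix.cons_val_one, Matrix.head_cons, Matrix.empty_val', Matrix.cons_val_fin_one,
    Matrix.head_fin_const, Matrix.cons_val_two, Matrix.tail_cons, Pi.sub_apply]
  ring

private lemma Dvol_eq_zero (P Q S : Fin 3 → ℝ) : Dvol P Q Q S = 0 := by
  simp only [Dvol, Matrix.det_fin_three, Matrix.of_apply, Matrix.cons_val', Matrix.cons_val_zero,
    Matrix.cons_val_one, Matrix.head_cons, Matrix.empty_val', Matrix.cons_val_fin_one,
    Matrix.head_fin_const, Matrix.cons_val_two, Matrix.tail_cons, Pi.sub_apply]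
  ring

/-- Cocycle expansion of `Dvol` with respect to a base point `A`. -/
private lemma Dvol_expand (A P Q R S : Fin 3 → ℝ) :
    Dvol P Q R S = Dvol A Q R S - Dvol A P R S + Dvol A P Q S - Dvol A P Q R := by
  simp only [Dvol, Matrix.det_fin_three, Matrix.of_apply, Matrix.cons_val', Matrix.cons_val_zero,
    Matrix.cons_val_one, Matrix.head_cons, Matrix.empty_val', Matrix.cons_val_fin_one,
    Matrix.head_fin_const, Matrix.cons_val_two, Matrix.tail_cons, Pi.sub_apply]
  ring

private lemma gp1 (A B C D E F : Fin 3 → ℝ) :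
    Dvol A C D E * Dvol A B C F - Dvol A B C E * Dvol A C D F
      + Dvol A B C D * Dvol A C E F = 0 := by
  linear_combination Dvol_gp A B C D E C F + Dvol A B D E * Dvol_eq_zero A C F
    - Dvol A B C E * Dvol_comm A C D F + Dvol A B C D * Dvol_comm A C E F

private lemma gp2 (A B C D E F : Fin 3 → ℝ) :
    Dvol A C D E * Dvol A B D F - Dvol A B D E * Dvol A C D F
      + Dvol A B C D * Dvol A D E F = 0 := by
  linear_combination Dvol_gp A B C D E D F - Dvol A B C E * Dvol_eq_zero A D F
    + Dvol A B C D * Dvol_comm A D E F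

private lemma gp3 (A B C D E F : Fin 3 → ℝ) :
    Dvol A C D E * Dvol A B E F - Dvol A B D E * Dvol A C E F
      + Dvol A B C E * Dvol A D E F = 0 := by
  linear_combination Dvol_gp A B C D E E F + Dvol A B C D * Dvol_eq_zero A E F

theorem stmt5 (A B C D E F : Fin 3 → ℝ) :
    Dvol A B C E * Dvol A B D F * Dvol C D E F
      + Dvol A C E F * Dvol A B D F * Dvol B C D E
      + Dvol A B C D * Dvol A D E F * Dvol B C E F
      = Dvol A B D E * Dvol A C D F * Dvol B C E F := by
  rw [Dvol_expand A C D E F, Dvol_expand A B C D E, Dvol_expand A B C E F]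
  linear_combination (-(Dvol A B D F)) * gp1 A B C D E F
    + (Dvol A C E F + Dvol A B C F - Dvol A B C E - Dvol A B E F) * gp2 A B C D E F
    + (Dvol A B D F) * gp3 A B C D E F
end

section
/- Let A, B, C, D, E, F be points in ℝ³ and define D(P,Q,R,S) := det(Q − P, R − P, S − P). Then: D(A,B,C,E)·D(A,B,D,F)·D(C,D,E,F) + D(A,B,D,E)·D(A,C,E,F)·D(B,C,D,F) = D(A,B,D,F)·D(A,C,D,E)·D(B,C,E,F) + D(A,B,C,D)·D(A,C,E,F)·D(B,D,E,F). -/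
namespace Stmt6Aux

/-- Bracket of three vectors. -/
noncomputable def G (x y z : Fin 3 → ℝ) : ℝ := (Matrix.of ![x, y, z]).det

lemma Dvol_eq (P Q R S : Fin 3 → ℝ) : Dvol P Q R S = G (Q - P) (R - P) (S - P) := rfl

lemma G_expand (x y z : Fin 3 → ℝ) :
    G x y z = x 0 * (y 1 * z 2) - x 0 * (y 2 * z 1) - x 1 * (y 0 * z 2)
      + x 1 * (y 2 * z 0) + x 2 * (y 0 * z 1) - x 2 * (y 1 * z 0) := by
  simp [G, Matrix.det_fin_three, Matrix.of_apply, Matrix.cons_val_zero, Matrix.cons_val_one,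
    Matrix.head_cons]
  ring

lemma Gshift (p x y z : Fin 3 → ℝ) :
    G (x - p) (y - p) (z - p) = G x y z - G p y z + G p x z - G p x y := by
  simp only [G_expand, Pi.sub_apply]
  ring

lemma gpB (b c d e f : Fin 3 → ℝ) :
    G b c d * G b e f - G b c e * G b d f + G b c f * G b d e = 0 := by
  simp only [G_expand]; ring

lemma gpC (b c d e f : Fin 3 → ℝ) :
    G b c e * G c d f - G b c d * G c e f - G b c f * G c d e = 0 := by
  simp only [G_expand]; ring

lemma gpD (b c d e f : Fin 3 → ℝ) :
    G b c d * G d e f - G b d e * G c d f + G b d f * G c d e = 0 := by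
  simp only [G_expand]; ring

lemma gpE (b c d e f : Fin 3 → ℝ) :
    G b d e * G c e f - G b c e * G d e f - G b e f * G c d e = 0 := by
  simp only [G_expand]; ring

lemma key (b c d e f : Fin 3 → ℝ) :
    G b c e * G b d f * G (d - c) (e - c) (f - c)
      + G b d e * G c e f * G (c - b) (d - b) (f - b)
      = G b d f * G c d e * G (c - b) (e - b) (f - b)
        + G b c d * G c e f * G (d - b) (e - b) (f - b) := by
  rw [Gshift c d e f, Gshift b c d f, Gshift b c e f, Gshift b d e f]
  linear_combination G c e f * gpB b c d e f + G b d f * gpC b c d e f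
    - G c e f * gpD b c d e f - G b d f * gpE b c d e f

end Stmt6Aux

theorem stmt6 (A B C D E F : Fin 3 → ℝ) :
    Dvol A B C E * Dvol A B D F * Dvol C D E F
      + Dvol A B D E * Dvol A C E F * Dvol B C D F
      = Dvol A B D F * Dvol A C D E * Dvol B C E F
      + Dvol A B C D * Dvol A C E F * Dvol B D E F := by
  simp only [Stmt6Aux.Dvol_eq]
  rw [← sub_sub_sub_cancel_right D C A, ← sub_sub_sub_cancel_right E C A,
    ← sub_sub_sub_cancel_right F C A, ← sub_sub_sub_cancel_right C B A,
    ← sub_sub_sub_cancel_right D B A, ← sub_sub_sub_cancel_right E B A,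
    ← sub_sub_sub_cancel_right F B A]
  exact Stmt6Aux.key (B - A) (C - A) (D - A) (E - A) (F - A)
end

section
/- Let A, B, C, D, E, F be points in ℝ³ and define D(P,Q,R,S) := det(Q − P, R − P, S − P). Then: D(A,B,C,E)·D(A,C,D,F)·D(B,D,E,F) = D(A,B,C,F)·D(A,B,D,E)·D(C,D,E,F) + D(A,B,C,F)·D(A,D,E,F)·D(B,C,D,E) + D(A,B,C,D)·D(A,C,E,F)·D(B,D,E,F). -/
lemma Dvol_translate (T P Q R S : Fin 3 → ℝ) :
    Dvol (P - T) (Q - T) (R - T) (S - T) = Dvol P Q R S := by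
  simp [Dvol, sub_sub_sub_cancel_right]

set_option maxHeartbeats 4000000 in
lemma key (B C D E F : Fin 3 → ℝ) :
    Dvol 0 B C E * Dvol 0 C D F * Dvol B D E F
      = Dvol 0 B C F * Dvol 0 B D E * Dvol C D E F
      + Dvol 0 B C F * Dvol 0 D E F * Dvol B C D E
      + Dvol 0 B C D * Dvol 0 C E F * Dvol B D E F := by
  simp only [Dvol, Matrix.det_fin_three, Matrix.of_apply, Matrix.cons_val', Matrix.cons_val_zero,
    Matrix.cons_val_one, Matrix.head_cons, Matrix.empty_val', Matrix.cons_val_fin_one,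
    Matrix.head_fin_const, Matrix.cons_val_two, Matrix.tail_cons, Pi.sub_apply, Pi.zero_apply,
    sub_zero]
  ring

theorem stmt7 (A B C D E F : Fin 3 → ℝ) :
    Dvol A B C E * Dvol A C D F * Dvol B D E F
      = Dvol A B C F * Dvol A B D E * Dvol C D E F
      + Dvol A B C F * Dvol A D E F * Dvol B C D E
      + Dvol A B C D * Dvol A C E F * Dvol B D E F := by
  have h := key (B - A) (C - A) (D - A) (E - A) (F - A)
  rw [show (0 : Fin 3 → ℝ) = A - A by simp] at h
  simpa only [Dvol_translate] using h
end

section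
/- Let A, B, C, D, E, F be points in ℝ³ and define D(P,Q,R,S) := det(Q − P, R − P, S − P). Then: D(A,B,C,E)·D(A,C,D,F)·D(B,D,E,F) + D(A,B,D,F)·D(A,C,E,F)·D(B,C,D,E) = D(A,B,D,F)·D(A,C,D,E)·D(B,C,E,F) + D(A,B,C,E)·D(A,D,E,F)·D(B,C,D,F). -/
private lemma Dvol_eq (P Q R S : Fin 3 → ℝ) :
    Dvol P Q R S =
      (Q 0 - P 0) * ((R 1 - P 1) * (S 2 - P 2) - (R 2 - P 2) * (S 1 - P 1))
      - (Q 1 - P 1) * ((R 0 - P 0) * (S 2 - P 2) - (R 2 - P 2) * (S 0 - P 0))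
      + (Q 2 - P 2) * ((R 0 - P 0) * (S 1 - P 1) - (R 1 - P 1) * (S 0 - P 0)) := by
  simp [Dvol, Matrix.det_fin_three, Matrix.cons_val_succ, Matrix.vecHead, Matrix.vecTail]
  ring

set_option maxHeartbeats 4000000 in
private lemma key8 (B C D E F : Fin 3 → ℝ) :
    Dvol 0 B C E * Dvol 0 C D F * Dvol B D E F
      + Dvol 0 B D F * Dvol 0 C E F * Dvol B C D E
      = Dvol 0 B D F * Dvol 0 C D E * Dvol B C E F
      + Dvol 0 B C E * Dvol 0 D E F * Dvol B C D F := by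
  simp only [Dvol_eq, Pi.zero_apply, sub_zero]
  ring

theorem stmt8 (A B C D E F : Fin 3 → ℝ) :
    Dvol A B C E * Dvol A C D F * Dvol B D E F
      + Dvol A B D F * Dvol A C E F * Dvol B C D E
      = Dvol A B D F * Dvol A C D E * Dvol B C E F
      + Dvol A B C E * Dvol A D E F * Dvol B C D F := by
  have h : ∀ P Q R S : Fin 3 → ℝ,
      Dvol P Q R S = Dvol (P - A) (Q - A) (R - A) (S - A) := fun P Q R S => by
    simp [Dvol, sub_sub_sub_cancel_right]
  rw [h A B C E, h A C D F, h B D E F, h A B D F, h A C E F, h B C D E, h A C D E,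
    h B C E F, h A D E F, h B C D F, sub_self]
  exact key8 _ _ _ _ _
end

section
/- For any six vectors a, b, c, d, e, f in ℝ⁴, writing [xyzw] for the determinant of the 4×4 matrix with columns x, y, z, w, the following trilinear identity holds: [abce]·[abdf]·[cdef] + [acef]·[abdf]·[bcde] + [abcd]·[adef]·[bcef] = [abde]·[acdf]·[bcef]. -/
/-- `[x y z w]`: determinant of the 4×4 matrix with columns `x, y, z, w`. -/
noncomputable def br4 (x y z w : Fin 4 → ℝ) : ℝ :=
  ((Matrix.of ![x, y, z, w]).transpose).det

lemma fin_mk2 (h : 2 < 4) : (⟨2,h⟩ : Fin 4) = 2 := rfl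
lemma fin_mk3 (h : 3 < 4) : (⟨3,h⟩ : Fin 4) = 3 := rfl

lemma br4_eq (x y z w : Fin 4 → ℝ) :
    br4 x y z w =
      x 0 * (y 1 * (z 2 * w 3 - z 3 * w 2) - y 2 * (z 1 * w 3 - z 3 * w 1) + y 3 * (z 1 * w 2 - z 2 * w 1))
    - x 1 * (y 0 * (z 2 * w 3 - z 3 * w 2) - y 2 * (z 0 * w 3 - z 3 * w 0) + y 3 * (z 0 * w 2 - z 2 * w 0))
    + x 2 * (y 0 * (z 1 * w 3 - z 3 * w 1) - y 1 * (z 0 * w 3 - z 3 * w 0) + y 3 * (z 0 * w 1 - z 1 * w 0))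
    - x 3 * (y 0 * (z 1 * w 2 - z 2 * w 1) - y 1 * (z 0 * w 2 - z 2 * w 0) + y 2 * (z 0 * w 1 - z 1 * w 0)) := by
  rw [br4, ← Matrix.det_transpose, Matrix.transpose_transpose, Matrix.det_succ_row_zero]
  simp [Matrix.det_succ_row_zero, Fin.sum_univ_succ, Matrix.det_fin_one]
  norm_num [Fin.succAbove, Fin.succ, Fin.castSucc, Fin.lt_def, Fin.castAdd, Fin.castLE, fin_mk2, fin_mk3]
  ring

/-- Grassmann–Plücker relation with common pair `{c, e}`. -/
lemma gp1_s9 (a b c d e f : Fin 4 → ℝ) :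
    br4 a b c e * br4 c d e f + br4 a c e f * br4 b c d e
      = br4 a c d e * br4 b c e f := by
  simp only [br4_eq]; ring

/-- Grassmann–Plücker relation with common pair `{a, d}`. -/
lemma gp2_s9 (a b c d e f : Fin 4 → ℝ) :
    br4 a b c d * br4 a d e f + br4 a b d f * br4 a c d e
      = br4 a b d e * br4 a c d f := by
  simp only [br4_eq]; ring

theorem stmt9 (a b c d e f : Fin 4 → ℝ) :
    br4 a b c e * br4 a b d f * br4 c d e f
      + br4 a c e f * br4 a b d f * br4 b c d e
      + br4 a b c d * br4 a d e f * br4 b c e f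
      = br4 a b d e * br4 a c d f * br4 b c e f := by
  linear_combination br4 a b d f * gp1_s9 a b c d e f + br4 b c e f * gp2_s9 a b c d e f
end

section
/- Let A, F be fixed points in ℝ³ and let D : ℝ → ℝ³ be a differentiable path such that the distances ‖D(t) − A‖ and ‖D(t) − F‖ are constant in t. Then for any fixed points B, E in ℝ³ and every t: (d/dt ‖D(t) − E‖²) · det(A − D(t), F − D(t), B − D(t)) = (d/dt ‖D(t) − B‖²) · det(A − D(t), F − D(t), E − D(t)). -/
open scoped RealInnerProductSpace

lemma deriv_norm_sq_sub (X : EuclideanSpace ℝ (Fin 3)) (D : ℝ → EuclideanSpace ℝ (Fin 3))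
    (hD : Differentiable ℝ D) (t : ℝ) :
    deriv (fun s => ‖D s - X‖ ^ 2) t = 2 * ⟪deriv D t, D t - X⟫ := by
  have h : HasDerivAt (fun s => D s - X) (deriv D t) t := ((hD t).hasDerivAt).sub_const X
  have h2 := h.inner ℝ h
  have heq : (fun s => ‖D s - X‖ ^ 2) = fun s => ⟪D s - X, D s - X⟫ := by
    funext s; rw [real_inner_self_eq_norm_sq]
  rw [heq, h2.deriv, real_inner_comm]; ring

theorem stmt11 (A F B E : EuclideanSpace ℝ (Fin 3))
    (D : ℝ → EuclideanSpace ℝ (Fin 3)) (hD : Differentiable ℝ D)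
    (hA : ∀ t, ‖D t - A‖ = ‖D 0 - A‖) (hF : ∀ t, ‖D t - F‖ = ‖D 0 - F‖)
    (t : ℝ) :
    deriv (fun s => ‖D s - E‖ ^ 2) t
        * (Matrix.of ![((A - D t : EuclideanSpace ℝ (Fin 3)) : Fin 3 → ℝ),
            (F - D t : EuclideanSpace ℝ (Fin 3)),
            (B - D t : EuclideanSpace ℝ (Fin 3))]).det
      = deriv (fun s => ‖D s - B‖ ^ 2) t
        * (Matrix.of ![((A - D t : EuclideanSpace ℝ (Fin 3)) : Fin 3 → ℝ),
            (F - D t : EuclideanSpace ℝ (Fin 3)),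
            (E - D t : EuclideanSpace ℝ (Fin 3))]).det := by
  have hDA : deriv (fun s => ‖D s - A‖ ^ 2) t = 0 := by
    have : (fun s => ‖D s - A‖ ^ 2) = fun _ => ‖D 0 - A‖ ^ 2 := by
      funext s; rw [hA s]
    rw [this]; simp
  have hDF : deriv (fun s => ‖D s - F‖ ^ 2) t = 0 := by
    have : (fun s => ‖D s - F‖ ^ 2) = fun _ => ‖D 0 - F‖ ^ 2 := by
      funext s; rw [hF s]
    rw [this]; simp
  have h1 : ⟪deriv D t, D t - A⟫ = 0 := by
    have := deriv_norm_sq_sub A D hD t; rw [hDA] at this; linarith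
  have h2 : ⟪deriv D t, D t - F⟫ = 0 := by
    have := deriv_norm_sq_sub F D hD t; rw [hDF] at this; linarith
  rw [deriv_norm_sq_sub E D hD t, deriv_norm_sq_sub B D hD t]
  set w := deriv D t with hw
  simp only [PiLp.inner_apply, RCLike.inner_apply, conj_trivial, Fin.sum_univ_three,
    Matrix.det_fin_three, Matrix.of_apply, Matrix.cons_val', Matrix.cons_val_zero,
    Matrix.cons_val_one, Matrix.head_cons, Matrix.empty_val', Matrix.cons_val_fin_one,
    Matrix.head_fin_const, Matrix.cons_val_two, Matrix.tail_cons, PiLp.sub_apply] at h1 h2 ⊢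
  linear_combination
    (2 * ((F 0 - D t 0) * ((B 1 - D t 1) * (E 2 - D t 2) - (B 2 - D t 2) * (E 1 - D t 1))
        - (F 1 - D t 1) * ((B 0 - D t 0) * (E 2 - D t 2) - (B 2 - D t 2) * (E 0 - D t 0))
        + (F 2 - D t 2) * ((B 0 - D t 0) * (E 1 - D t 1) - (B 1 - D t 1) * (E 0 - D t 0)))) * h1
    - (2 * ((A 0 - D t 0) * ((B 1 - D t 1) * (E 2 - D t 2) - (B 2 - D t 2) * (E 1 - D t 1))
        - (A 1 - D t 1) * ((B 0 - D t 0) * (E 2 - D t 2) - (B 2 - D t 2) * (E 0 - D t 0))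
        + (A 2 - D t 2) * ((B 0 - D t 0) * (E 1 - D t 1) - (B 1 - D t 1) * (E 0 - D t 0)))) * h2
end
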